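/- Let D be the squared-distance matrix of points x_1,...,x_N ∈ ℝ^m, partitioned into clusters, Λ = span of cluster indicator vectors, and P_{Λ⊥} the orthogonal projection onto Λ^⊥. Let Ψ be the m×N matrix whose column for point x_{a,i} is x_{a,i} − c_a, where c_a is the centroid of cluster a. Then ‖P_{Λ⊥} D P_{Λ⊥}‖_{2→2} = 2‖Ψ‖_{2→2}². -/

import Mathlib

open Matrix BigOperators

/-- The spectral norm (ℓ²→ℓ² operator norm) of a real matrix. -/
noncomputable def specNorm {α β : Type*} [Fintype α] [Fintype β] [DecidableEq β]
    (A : Matrix α β ℝ) : ℝ :=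
  ‖LinearMap.toContinuousLinearMap (Matrix.toEuclideanLin A)‖

open scoped Matrix.Norms.L2Operator in
lemma specNorm_eq_l2norm {α β : Type*} [Fintype α] [Fintype β] [DecidableEq β]
    (A : Matrix α β ℝ) : specNorm A = ‖A‖ := rfl

open scoped Matrix.Norms.L2Operator in
lemma specNorm_smul' {α β : Type*} [Fintype α] [Fintype β] [DecidableEq β]
    (c : ℝ) (A : Matrix α β ℝ) : specNorm (c • A) = |c| * specNorm A := by
  rw [specNorm_eq_l2norm, specNorm_eq_l2norm, norm_smul, Real.norm_eq_abs]

open scoped Matrix.Norms.L2Operator in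
lemma specNorm_conjT_mul_self' {α β : Type*} [Fintype α] [Fintype β] [DecidableEq β]
    [DecidableEq α] (A : Matrix α β ℝ) : specNorm (Aᴴ * A) = specNorm A ^ 2 := by
  rw [specNorm_eq_l2norm, specNorm_eq_l2norm, Matrix.l2_opNorm_conjTranspose_mul_self, sq]

set_option linter.unusedSectionVars false in
lemma mul_vecMulVec' {ι κ : Type*} [Fintype ι] [Fintype κ] (M : Matrix κ ι ℝ) (u v : ι → ℝ) :
    M * vecMulVec u v = vecMulVec (M *ᵥ u) v := by
  ext i j
  simp [Matrix.mul_apply, vecMulVec_apply, Matrix.mulVec, dotProduct, Finset.sum_mul, mul_assoc]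

set_option linter.unusedSectionVars false in
lemma vecMulVec_mul' {ι κ : Type*} [Fintype ι] [Fintype κ] (u : κ → ℝ) (v : ι → ℝ)
    (M : Matrix ι ι ℝ) : vecMulVec u v * M = vecMulVec u (v ᵥ* M) := by
  ext i j
  simp [Matrix.mul_apply, vecMulVec_apply, Matrix.vecMul, dotProduct, Finset.mul_sum, mul_assoc]

/-- With D the squared-distance matrix of clustered points,
P the orthogonal projection onto the complement of the span of the cluster
indicators, and Ψ the matrix of centered points, ‖P D P‖ = 2‖Ψ‖². -/
theorem stmt8 {k m : ℕ} (n : Fin k → ℕ) (hn : ∀ a, 0 < n a)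
    (x : ((a : Fin k) × Fin (n a)) → EuclideanSpace ℝ (Fin m))
    (D : Matrix ((a : Fin k) × Fin (n a)) ((a : Fin k) × Fin (n a)) ℝ)
    (hD : D = fun i j => ‖x i - x j‖ ^ 2)
    (c : Fin k → EuclideanSpace ℝ (Fin m))
    (hc : c = fun a => ((n a : ℝ)⁻¹) • ∑ i : Fin (n a), x ⟨a, i⟩)
    (P : Matrix ((a : Fin k) × Fin (n a)) ((a : Fin k) × Fin (n a)) ℝ)
    (hP : P = 1 - ∑ a : Fin k, ((n a : ℝ)⁻¹) •
      Matrix.vecMulVec (fun i => if i.1 = a then (1 : ℝ) else 0)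
        (fun j => if j.1 = a then (1 : ℝ) else 0))
    (Ψ : Matrix (Fin m) ((a : Fin k) × Fin (n a)) ℝ)
    (hΨ : Ψ = fun r i => (x i - c i.1) r) :
    specNorm (P * D * P) = 2 * specNorm Ψ ^ 2 := by
  classical
  -- entrywise formula for P
  have hPapp : ∀ i j : (a : Fin k) × Fin (n a), P i j = (if i = j then 1 else 0)
      - (n i.1 : ℝ)⁻¹ * (if j.1 = i.1 then 1 else 0) := by
    intro i j
    simp only [hP, Matrix.sub_apply, Matrix.one_apply, Matrix.sum_apply, Matrix.smul_apply,
      vecMulVec_apply, smul_eq_mul, mul_ite, ite_mul, one_mul, zero_mul, mul_one, mul_zero]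
    congr 1
    simp only [Finset.sum_ite_eq, Finset.mem_univ, if_true]
    by_cases h : j.1 = i.1 <;> simp [h]
    exact fun hh => absurd hh.symm h
  have hPsym : Pᵀ = P := by
    ext i j
    rw [Matrix.transpose_apply, hPapp i j, hPapp j i]
    rcases eq_or_ne i j with h | h
    · rw [h]
    · simp only [if_neg h, if_neg (Ne.symm h)]
      rcases eq_or_ne j.1 i.1 with h2 | h2
      · simp [h2]
      · simp [h2, Ne.symm h2]
  have hPH : Pᴴ = P := by
    ext i j
    rw [Matrix.conjTranspose_apply, star_trivial]
    exact congrFun (congrFun hPsym i) j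
  -- the indicator-count computation
  have hcard : ∀ b : Fin k,
      (∑ j : (a : Fin k) × Fin (n a), if j.1 = b then (1:ℝ) else 0) = n b := by
    intro b
    rw [← Finset.univ_sigma_univ, Finset.sum_sigma]
    simp only [Finset.sum_ite_eq, Finset.sum_const, Finset.mem_univ, if_true,
      nsmul_eq_mul, mul_one]
    simp [apply_ite (Finset.card), apply_ite (fun (q:ℕ) => (q:ℝ)), Finset.sum_ite_eq]
  -- P kills the all-ones vector
  have hP1 : P *ᵥ (fun _ => (1:ℝ)) = 0 := by
    funext i
    simp only [Matrix.mulVec, dotProduct, mul_one, Pi.zero_apply]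
    rw [Finset.sum_congr rfl fun j _ => hPapp i j, Finset.sum_sub_distrib,
      ← Finset.mul_sum, hcard i.1, Finset.sum_ite_eq Finset.univ i fun _ => (1:ℝ)]
    have : ((n i.1 : ℝ))⁻¹ * (n i.1) = 1 :=
      inv_mul_cancel₀ (by exact_mod_cast (hn i.1).ne')
    simp [this]
  have hP1' : (fun _ => (1:ℝ)) ᵥ* P = 0 := by
    rw [← hPsym, Matrix.vecMul_transpose, hP1]
  -- the matrix of points
  set X : Matrix (Fin m) ((a : Fin k) × Fin (n a)) ℝ := Matrix.of fun r i => x i r with hX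
  have hXP : X * P = Ψ := by
    ext r j
    rw [Matrix.mul_apply]
    have step : ∀ p : (a : Fin k) × Fin (n a), X r p * P p j
        = (if p = j then x j r else 0)
          - (n p.1 : ℝ)⁻¹ * (if j.1 = p.1 then x p r else 0) := by
      intro p
      rw [hPapp p j]
      rcases eq_or_ne p j with h | h
      · rw [h]; simp [hX, mul_sub, mul_comm]; ring
      · by_cases h2 : j.1 = p.1 <;> simp [h, h2, mul_sub, hX, mul_comm]
    rw [Finset.sum_congr rfl fun p _ => step p, Finset.sum_sub_distrib]
    have e1 : (∑ p : (a : Fin k) × Fin (n a), if p = j then x j r else 0) = x j r := by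
      simp [Finset.sum_ite_eq']
    have e2 : (∑ p : (a : Fin k) × Fin (n a),
        (n p.1 : ℝ)⁻¹ * (if j.1 = p.1 then x p r else 0))
        = (n j.1 : ℝ)⁻¹ * ∑ t : Fin (n j.1), x ⟨j.1, t⟩ r := by
      rw [← Finset.univ_sigma_univ, Finset.sum_sigma]
      have inner : ∀ b : Fin k, (∑ t : Fin (n b),
          (n b : ℝ)⁻¹ * (if j.1 = b then x ⟨b, t⟩ r else 0))
          = if b = j.1 then (n j.1 : ℝ)⁻¹ * ∑ t : Fin (n b), x ⟨b, t⟩ r else 0 := by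
        intro b
        by_cases h : b = j.1
        · subst h; simp [Finset.mul_sum]
        · simp [h, mt Eq.symm h]
      rw [Finset.sum_congr rfl fun b _ => inner b,
        Finset.sum_ite_eq' Finset.univ j.1]
      simp
    rw [e1, e2]
    simp only [hΨ]
    have e3 : (x j - c j.1) r = x j r - c j.1 r := rfl
    rw [e3]
    simp only [hc]
    have e4 : ((n j.1 : ℝ)⁻¹ • ∑ t : Fin (n j.1), x ⟨j.1, t⟩) r
        = (n j.1 : ℝ)⁻¹ * ∑ t : Fin (n j.1), x ⟨j.1, t⟩ r := by
      have := Finset.sum_apply r Finset.univ (fun t : Fin (n j.1) => x ⟨j.1, t⟩)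
      simp only [PiLp.smul_apply, smul_eq_mul]
      rw [WithLp.ofLp_sum, this]
    rw [e4]
  -- decomposition of D
  set ν : ((a : Fin k) × Fin (n a)) → ℝ := fun i => ‖x i‖ ^ 2 with hν
  have hD2 : D = vecMulVec ν (fun _ => 1) + vecMulVec (fun _ => 1) ν
      + (-2 : ℝ) • (Xᴴ * X) := by
    ext i j
    have hinner : (Xᴴ * X) i j = inner ℝ (x i) (x j) := by
      simp [Matrix.mul_apply, Matrix.conjTranspose_apply, PiLp.inner_apply,
        RCLike.inner_apply, hX, mul_comm]
    simp only [hD, Matrix.add_apply, Matrix.smul_apply, vecMulVec_apply, hinner, hν,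
      smul_eq_mul, mul_one, one_mul]
    rw [@norm_sub_sq_real (EuclideanSpace ℝ (Fin m)) _ _ (x i) (x j)]
    ring
  -- the key identity
  have key : P * D * P = (-2 : ℝ) • (Ψᴴ * Ψ) := by
    rw [hD2, Matrix.mul_add, Matrix.mul_add, Matrix.add_mul, Matrix.add_mul]
    have t1 : P * (vecMulVec ν fun _ => 1) * P = 0 := by
      rw [Matrix.mul_assoc, vecMulVec_mul', hP1']
      have : vecMulVec ν (0 : ((a : Fin k) × Fin (n a)) → ℝ) = 0 := by
        ext i j; simp [vecMulVec_apply]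
      rw [this, Matrix.mul_zero]
    have t2 : P * (vecMulVec (fun _ => 1) ν) * P = 0 := by
      rw [mul_vecMulVec', hP1]
      have : vecMulVec (0 : ((a : Fin k) × Fin (n a)) → ℝ) ν = 0 := by
        ext i j; simp [vecMulVec_apply]
      rw [this, Matrix.zero_mul]
    have t3 : P * ((-2 : ℝ) • (Xᴴ * X)) * P = (-2 : ℝ) • (Ψᴴ * Ψ) := by
      rw [Matrix.mul_smul, Matrix.smul_mul]
      congr 1
      calc P * (Xᴴ * X) * P = (P * Xᴴ) * (X * P) := by
            rw [← Matrix.mul_assoc, ← Matrix.mul_assoc]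
        _ = (X * P)ᴴ * (X * P) := by rw [Matrix.conjTranspose_mul, hPH]
        _ = Ψᴴ * Ψ := by rw [hXP]
    rw [t1, t2, t3]
    simp
  rw [key, specNorm_smul', specNorm_conjT_mul_self']
  norm_num
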